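/- arXiv:2510.26891 — 2 statements merged into one kernel-verified Lean document; each statement's English description precedes it below -/
import Mathlib

section
/- Let φ > 0 and G' ≥ 0 be real numbers, and suppose the price d > 0 paid per item of Good equals the price d' > 0 paid per item of Right (d = d'). Then the potential frustration pf = max(0, (φ - G' - (d'/(d+d'))·|φ - G'|)/φ) satisfies pf ≤ 1/2. -/
/-! With `s = d' / (d + d')`, `|x| ≥ x` gives
`φ - G' - s * |φ - G'| ≤ (1 - s) * (φ - G') ≤ (1 - s) * φ`, so the potential frustration is at most
`1 - s = d / (d + d')`, which is `1 / 2` when `d = d'`. -/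

noncomputable def potentialFrustration (φ G' d d' : ℝ) : ℝ :=
  max 0 ((φ - G' - d' / (d + d') * |φ - G'|) / φ)

lemma sub_mul_abs_le_one_sub_mul (x : ℝ) {s : ℝ} (hs : 0 ≤ s) : x - s * |x| ≤ (1 - s) * x := by
  have : s * x ≤ s * |x| := mul_le_mul_of_nonneg_left (le_abs_self x) hs
  linarith

lemma max_zero_sub_mul_abs_div_le_one_sub {φ G' s : ℝ} (hφ : 0 < φ) (hG' : 0 ≤ G')
    (hs₀ : 0 ≤ s) (hs₁ : s ≤ 1) : max 0 ((φ - G' - s * |φ - G'|) / φ) ≤ 1 - s := by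
  refine max_le (by linarith) ?_
  rw [div_le_iff₀ hφ]
  calc φ - G' - s * |φ - G'| ≤ (1 - s) * (φ - G') := sub_mul_abs_le_one_sub_mul _ hs₀
    _ ≤ (1 - s) * φ := mul_le_mul_of_nonneg_left (by linarith) (by linarith)

theorem potentialFrustration_le {φ G' d d' : ℝ} (hφ : 0 < φ) (hG' : 0 ≤ G') (hd : 0 < d)
    (hd' : 0 < d') : potentialFrustration φ G' d d' ≤ d / (d + d') := by
  have hsum : 0 < d + d' := add_pos hd hd'
  have hshare : 1 - d' / (d + d') = d / (d + d') := by field_simp; ring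
  rw [← hshare]
  exact max_zero_sub_mul_abs_div_le_one_sub hφ hG' (by positivity)
    ((div_le_one hsum).mpr (by linarith))

theorem potential_frustration_le_half (φ G' d d' : ℝ) (hφ : 0 < φ) (hG' : 0 ≤ G')
    (hd : 0 < d) (hd' : 0 < d') (hdd' : d = d') :
    max 0 ((φ - G' - d' / (d + d') * |φ - G'|) / φ) ≤ 1 / 2 := by
  have hhalf : d / (d + d') = 1 / 2 := by
    rw [← hdd']
    field_simp
    ring
  exact hhalf ▸ potentialFrustration_le hφ hG' hd hd'
end

section
/- Let M > 0 and c ≥ 1 be real numbers, let uG : ℝ → ℝ be a nonnegative monotone nondecreasing function, and let λ ≥ 0 be such that uM(t) = λ·t. Assume that for every t ≥ M/2 one has λ·t > uG(t). Suppose x* ≥ 0 and y* ≥ 0 satisfy y* + c·x* = M and (x*, y*) is optimal, i.e., uG(x*) + λ·y* ≥ uG(x) + λ·y for every x ≥ 0, y ≥ 0 with c·x + y ≤ M. Then y* > c·x*, and consequently y* > M/2. -/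
theorem optimal_basket_money_dominant (M c lam : ℝ) (uG : ℝ → ℝ)
    (hM : 0 < M) (hc : 1 ≤ c)
    (huG0 : ∀ t : ℝ, 0 ≤ uG t) (hmono : Monotone uG) (hlam : 0 ≤ lam)
    (hval : ∀ t : ℝ, M / 2 ≤ t → uG t < lam * t)
    (x' y' : ℝ) (hx' : 0 ≤ x') (hy' : 0 ≤ y') (hbudget : y' + c * x' = M)
    (hopt : ∀ x y : ℝ, 0 ≤ x → 0 ≤ y → c * x + y ≤ M →
      uG x + lam * y ≤ uG x' + lam * y') :
    c * x' < y' ∧ M / 2 < y' := by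
  have hkey : c * x' < y' := by
    by_contra h
    push_neg at h
    have hcx : M / 2 ≤ c * x' := by linarith
    have h1 := hopt 0 M le_rfl hM.le (by linarith)
    have h2 : lam * c * x' ≤ uG x' := by
      have := huG0 0
      nlinarith
    have h3 : uG x' ≤ uG (c * x') := hmono (by nlinarith)
    have h4 := hval (c * x') hcx
    linarith [h2, h3, h4]
  exact ⟨hkey, by linarith⟩
end
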